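/- Fix λ > 0 and an even integer k ≥ 2. Define P₁ = ∫_{-∞}^{∞} g(x)·(Pr[Lap(λ) > x-1]·Pr[Lap(λ) ≤ x-1])^{k/2} dx and P₃ = ∫_{-∞}^{∞} g(x)·(Pr[Lap(λ) > x]·Pr[Lap(λ) ≤ x-2])^{k/2} dx, where g is the density of 1 + Lap(λ). Then P₁/P₃ > e^{k/(2λ)}. Consequently, if λ ≤ k/(4ε), then P₁/P₃ > e^{2ε}, so the binary sparse vector technique with noise scale λ does not satisfy ε-differential privacy. -/

import Mathlib

open Real MeasureTheory

/-- Pr[Lap(l) > t] for the Laplace distribution with scale l,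
density (1/(2l))·exp(-|y|/l). -/
noncomputable def lapTail (l t : ℝ) : ℝ :=
  ∫ y in Set.Ioi t, (1 / (2 * l)) * Real.exp (-|y| / l)

/-- Pr[Lap(l) ≤ t]. -/
noncomputable def lapCDF (l t : ℝ) : ℝ :=
  ∫ y in Set.Iic t, (1 / (2 * l)) * Real.exp (-|y| / l)

/-!
On `t ≤ 0` the CDF of `Lap(λ)` is `e^{t/λ}/2` and on `t ≥ 0` its tail is `e^{-t/λ}/2`, so a unit
shift of the argument within these ranges scales them by exactly `e^{1/λ}`. Hence
`e^{1/λ} Pr[Lap > x] Pr[Lap ≤ x - 2] < Pr[Lap > x - 1] Pr[Lap ≤ x - 1]` for every `x`: for `x ≤ 0`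
(resp. `x ≥ 1`) one factor scales exactly and the other is strictly monotone, and for `0 < x < 1`
it is an explicit computation. Raising to the power `k/2` and integrating against the positive
density `g` gives `P₁ > e^{k/(2λ)} P₃`.
-/

open Set

theorem integral_pos_of_forall_pos {α : Type*} [MeasurableSpace α]
    {μ : Measure α} [NeZero μ] {f : α → ℝ} (hf : Integrable f μ) (hpos : ∀ x, 0 < f x) :
    0 < ∫ x, f x ∂μ := by
  have hsupp : Function.support f = univ := eq_univ_of_forall fun x => (hpos x).ne'
  rw [integral_pos_iff_support_of_nonneg (fun x => (hpos x).le) hf, hsupp]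
  exact pos_iff_ne_zero.2 (NeZero.ne μ ∘ Measure.measure_univ_eq_zero.1)

theorem integral_lt_integral_of_forall_lt {α : Type*} [MeasurableSpace α]
    {μ : Measure α} [NeZero μ] {f g : α → ℝ} (hf : Integrable f μ) (hg : Integrable g μ)
    (hlt : ∀ x, f x < g x) : ∫ x, f x ∂μ < ∫ x, g x ∂μ := by
  rw [← sub_pos, ← integral_sub hg hf]
  exact integral_pos_of_forall_pos (hg.sub hf) fun x => sub_pos.2 (hlt x)

section Laplace

noncomputable def lapDensity (l y : ℝ) : ℝ := 1 / (2 * l) * exp (-|y| / l)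

variable {l : ℝ}

theorem lapTail_eq_integral (t : ℝ) : lapTail l t = ∫ y in Ioi t, lapDensity l y := rfl

theorem lapCDF_eq_integral (t : ℝ) : lapCDF l t = ∫ y in Iic t, lapDensity l y := rfl

theorem lapCDF_eq_lapTail_neg (t : ℝ) : lapCDF l t = lapTail l (-t) := by
  simp only [lapCDF_eq_integral, lapTail_eq_integral, ← integral_comp_neg_Iic, lapDensity,
    abs_neg]

theorem lapTail_of_nonneg (hl : 0 < l) {t : ℝ} (ht : 0 ≤ t) :
    lapTail l t = exp (-t / l) / 2 := by
  have hcongr : EqOn (lapDensity l) (fun y => 1 / (2 * l) * exp (-(l⁻¹ * y))) (Ioi t) :=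
    fun y hy => by simp only [lapDensity, abs_of_pos (ht.trans_lt hy), div_eq_inv_mul, mul_neg]
  rw [lapTail_eq_integral, setIntegral_congr_fun measurableSet_Ioi hcongr, integral_const_mul,
    integral_comp_mul_left_Ioi (fun y => exp (-y)) t (inv_pos.2 hl), integral_exp_neg_Ioi]
  field_simp
  ring_nf

theorem lapTail_zero (hl : 0 < l) : lapTail l 0 = 1 / 2 := by
  simp [lapTail_of_nonneg hl le_rfl]

theorem lapCDF_zero (hl : 0 < l) : lapCDF l 0 = 1 / 2 := by
  rw [lapCDF_eq_lapTail_neg, neg_zero, lapTail_zero hl]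

-- A nonzero integral forces integrability, so `lapCDF l 0 = lapTail l 0 = 1 / 2` suffices.
theorem integrable_lapDensity (hl : 0 < l) : Integrable (lapDensity l) := by
  have hIic : IntegrableOn (lapDensity l) (Iic 0) :=
    .of_integral_ne_zero (by rw [← lapCDF_eq_integral, lapCDF_zero hl]; norm_num)
  have hIoi : IntegrableOn (lapDensity l) (Ioi 0) :=
    .of_integral_ne_zero (by rw [← lapTail_eq_integral, lapTail_zero hl]; norm_num)
  rw [← integrableOn_univ, ← Iic_union_Ioi (a := (0 : ℝ))]
  exact hIic.union hIoi

theorem lapCDF_add_lapTail (hl : 0 < l) (t : ℝ) : lapCDF l t + lapTail l t = 1 := by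
  have hint := integrable_lapDensity hl
  rw [lapCDF_eq_integral, lapTail_eq_integral,
    intervalIntegral.integral_Iic_add_Ioi hint.integrableOn hint.integrableOn,
    ← intervalIntegral.integral_Iic_add_Ioi (b := 0) hint.integrableOn hint.integrableOn,
    ← lapCDF_eq_integral, ← lapTail_eq_integral, lapCDF_zero hl, lapTail_zero hl]
  norm_num

theorem lapTail_of_nonpos (hl : 0 < l) {t : ℝ} (ht : t ≤ 0) :
    lapTail l t = 1 - exp (t / l) / 2 := by
  rw [← lapCDF_add_lapTail hl t, lapCDF_eq_lapTail_neg, lapTail_of_nonneg hl (neg_nonneg.2 ht),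
    neg_neg]
  ring

theorem lapCDF_of_nonpos (hl : 0 < l) {t : ℝ} (ht : t ≤ 0) :
    lapCDF l t = exp (t / l) / 2 := by
  rw [lapCDF_eq_lapTail_neg, lapTail_of_nonneg hl (neg_nonneg.2 ht), neg_neg]

theorem lapTail_strictAnti (hl : 0 < l) : StrictAnti (lapTail l) := by
  refine StrictAntiOn.Iic_union_Ici (a := 0) (fun s hs t ht hst => ?_) fun s hs t ht hst => ?_
  · rw [lapTail_of_nonpos hl hs, lapTail_of_nonpos hl ht]
    linarith [exp_lt_exp.2 (div_lt_div_of_pos_right hst hl)]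
  · rw [lapTail_of_nonneg hl hs, lapTail_of_nonneg hl ht]
    linarith [exp_lt_exp.2 (div_lt_div_of_pos_right (neg_lt_neg hst) hl)]

theorem lapCDF_strictMono (hl : 0 < l) : StrictMono (lapCDF l) := fun s t hst => by
  simpa only [lapCDF_eq_lapTail_neg] using lapTail_strictAnti hl (neg_lt_neg hst)

theorem lapTail_pos (hl : 0 < l) (t : ℝ) : 0 < lapTail l t := by
  rcases le_total 0 t with ht | ht
  · rw [lapTail_of_nonneg hl ht]; positivity
  · linarith [lapTail_zero hl, (lapTail_strictAnti hl).antitone ht]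

theorem lapCDF_pos (hl : 0 < l) (t : ℝ) : 0 < lapCDF l t := by
  rw [lapCDF_eq_lapTail_neg]; exact lapTail_pos hl _

theorem lapTail_le_one (hl : 0 < l) (t : ℝ) : lapTail l t ≤ 1 := by
  linarith [lapCDF_add_lapTail hl t, lapCDF_pos hl t]

theorem lapCDF_le_one (hl : 0 < l) (t : ℝ) : lapCDF l t ≤ 1 := by
  linarith [lapCDF_add_lapTail hl t, lapTail_pos hl t]

theorem lapTail_add (hl : 0 < l) {t c : ℝ} (ht : 0 ≤ t) (hc : 0 ≤ c) :
    lapTail l (t + c) = exp (-c / l) * lapTail l t := by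
  rw [lapTail_of_nonneg hl (add_nonneg ht hc), lapTail_of_nonneg hl ht, mul_div_assoc', ← exp_add]
  ring_nf

theorem lapCDF_sub (hl : 0 < l) {t c : ℝ} (ht : t ≤ 0) (hc : 0 ≤ c) :
    lapCDF l (t - c) = exp (-c / l) * lapCDF l t := by
  rw [lapCDF_of_nonpos hl (by linarith), lapCDF_of_nonpos hl ht, mul_div_assoc', ← exp_add]
  ring_nf

theorem exp_one_div_mul_lapTail_mul_lapCDF_lt (hl : 0 < l) (x : ℝ) :
    exp (1 / l) * (lapTail l x * lapCDF l (x - 2)) < lapTail l (x - 1) * lapCDF l (x - 1) := by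
  have hcancel : exp (1 / l) * exp (-1 / l) = 1 := by rw [← exp_add, neg_div]; simp
  rcases le_or_gt x 0 with hx | hx
  · have hF : lapCDF l (x - 2) = exp (-1 / l) * lapCDF l (x - 1) := by
      rw [← lapCDF_sub hl (by linarith) zero_le_one]; ring_nf
    have hS := lapTail_strictAnti hl (sub_one_lt x)
    calc exp (1 / l) * (lapTail l x * lapCDF l (x - 2))
        = lapTail l x * lapCDF l (x - 1) := by
          rw [hF]; linear_combination lapTail l x * lapCDF l (x - 1) * hcancel
      _ < lapTail l (x - 1) * lapCDF l (x - 1) := mul_lt_mul_of_pos_right hS (lapCDF_pos hl _)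
  rcases le_or_gt 1 x with hx1 | hx1
  · have hS : lapTail l x = exp (-1 / l) * lapTail l (x - 1) := by
      rw [← lapTail_add hl (by linarith) zero_le_one]; ring_nf
    have hF := lapCDF_strictMono hl (show x - 2 < x - 1 by linarith)
    calc exp (1 / l) * (lapTail l x * lapCDF l (x - 2))
        = lapTail l (x - 1) * lapCDF l (x - 2) := by
          rw [hS]; linear_combination lapTail l (x - 1) * lapCDF l (x - 2) * hcancel
      _ < lapTail l (x - 1) * lapCDF l (x - 1) := mul_lt_mul_of_pos_left hF (lapTail_pos hl _)
  -- For `0 < x < 1`, with `u = exp ((x - 1) / l)` the left side is `exp (-1 / l) / 4 < u / 4`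
  -- and the right side is `(1 - u / 2) * (u / 2) > u / 4`.
  rw [lapTail_of_nonneg hl hx.le, lapCDF_of_nonpos hl (by linarith),
    lapTail_of_nonpos hl (by linarith), lapCDF_of_nonpos hl (by linarith)]
  set u := exp ((x - 1) / l)
  have hleft : exp (1 / l) * (exp (-x / l) / 2 * (exp ((x - 2) / l) / 2)) = exp (-1 / l) / 4 := by
    rw [div_mul_div_comm, mul_div_assoc', ← exp_add, ← exp_add]; ring_nf
  have hu : exp (-1 / l) < u := exp_lt_exp.2 (div_lt_div_of_pos_right (by linarith) hl)
  have hu1 : u < 1 := exp_lt_one_iff.2 (div_neg_of_neg_of_pos (by linarith) hl)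
  rw [hleft]
  nlinarith [exp_pos (-1 / l)]

theorem exp_mul_pow_lapTail_mul_lapCDF_lt (hl : 0 < l) {m : ℕ} (hm : m ≠ 0) (x : ℝ) :
    exp (m / l) * (lapTail l x * lapCDF l (x - 2)) ^ m
      < (lapTail l (x - 1) * lapCDF l (x - 1)) ^ m :=
  calc exp (m / l) * (lapTail l x * lapCDF l (x - 2)) ^ m
      = (exp (1 / l) * (lapTail l x * lapCDF l (x - 2))) ^ m := by
        rw [mul_pow (exp _), ← exp_nat_mul, mul_one_div]
    _ < (lapTail l (x - 1) * lapCDF l (x - 1)) ^ m :=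
        pow_lt_pow_left₀ (exp_one_div_mul_lapTail_mul_lapCDF_lt hl x)
          (mul_pos (exp_pos _) (mul_pos (lapTail_pos hl _) (lapCDF_pos hl _))).le hm

theorem lapDensity_pos (hl : 0 < l) (y : ℝ) : 0 < lapDensity l y := by
  unfold lapDensity; positivity

theorem integrable_lapDensity_sub_mul_pow_lapTail_mul_lapCDF (hl : 0 < l) (c : ℝ)
    {f g : ℝ → ℝ} (hf : Measurable f) (hg : Measurable g) (m : ℕ) :
    Integrable fun x => lapDensity l (x - c) * (lapTail l (f x) * lapCDF l (g x)) ^ m := by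
  have hmeas : Measurable fun x => lapTail l (f x) * lapCDF l (g x) :=
    ((lapTail_strictAnti hl).antitone.measurable.comp hf).mul
      ((lapCDF_strictMono hl).monotone.measurable.comp hg)
  refine ((integrable_lapDensity hl).comp_sub_right c).mul_bdd (c := 1)
    (hmeas.pow_const m).aestronglyMeasurable (ae_of_all _ fun x => ?_)
  have h0 := mul_pos (lapTail_pos hl (f x)) (lapCDF_pos hl (g x))
  rw [norm_pow, Real.norm_of_nonneg h0.le]
  exact pow_le_one₀ h0.le (mul_le_one₀ (lapTail_le_one hl _) (lapCDF_pos hl _).le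
    (lapCDF_le_one hl _))

end Laplace

/-- the binary SVT counterexample: P₁/P₃ > e^{k/(2λ)}, hence
λ ≤ k/(4ε) implies P₁/P₃ > e^{2ε}, violating ε-differential privacy. -/
theorem stmt12 (l ε : ℝ) (hl : 0 < l) (hε : 0 < ε)
    (k m : ℕ) (hk : 2 ≤ k) (hm : k = 2 * m)
    (g : ℝ → ℝ) (hg : g = fun x => (1 / (2 * l)) * Real.exp (-|x - 1| / l))
    (P1 P3 : ℝ)
    (hP1 : P1 = ∫ x : ℝ, g x * (lapTail l (x - 1) * lapCDF l (x - 1)) ^ m)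
    (hP3 : P3 = ∫ x : ℝ, g x * (lapTail l x * lapCDF l (x - 2)) ^ m) :
    P1 / P3 > Real.exp ((k : ℝ) / (2 * l)) ∧
      (l ≤ (k : ℝ) / (4 * ε) → P1 / P3 > Real.exp (2 * ε)) := by
  obtain rfl : g = fun x => lapDensity l (x - 1) := hg
  subst hm
  have hm0 : m ≠ 0 := by omega
  have hint1 := integrable_lapDensity_sub_mul_pow_lapTail_mul_lapCDF hl 1
    (f := fun x => x - 1) (g := fun x => x - 1) (by fun_prop) (by fun_prop) m
  have hint3 := integrable_lapDensity_sub_mul_pow_lapTail_mul_lapCDF hl 1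
    (f := fun x => x) (g := fun x => x - 2) (by fun_prop) (by fun_prop) m
  have hP3pos : 0 < P3 := by
    rw [hP3]
    exact integral_pos_of_forall_pos hint3 fun x =>
      mul_pos (lapDensity_pos hl _) (pow_pos (mul_pos (lapTail_pos hl _) (lapCDF_pos hl _)) m)
  have hlt : exp (m / l) * P3 < P1 := by
    rw [hP1, hP3, ← integral_const_mul]
    exact integral_lt_integral_of_forall_lt (hint3.const_mul _) hint1 fun x =>
      (mul_left_comm _ _ _).trans_lt <| mul_lt_mul_of_pos_left
        (exp_mul_pow_lapTail_mul_lapCDF_lt hl hm0 x) (lapDensity_pos hl (x - 1))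
  have hkm : ((2 * m : ℕ) : ℝ) / (2 * l) = m / l := by
    push_cast; field_simp
  have hratio : exp ((2 * m : ℕ) / (2 * l)) < P1 / P3 := by
    rwa [lt_div_iff₀ hP3pos, hkm]
  refine ⟨hratio, fun hle => (exp_le_exp.2 ?_).trans_lt hratio⟩
  rw [le_div_iff₀ (by positivity)] at hle ⊢
  linarith
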